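/- Let K be a convex subset of ℝⁿ with positive Gaussian measure, θ a unit vector, and H_θ(K) = {x : ⟨x,θ⟩ ≤ ψ^{-1}(γ(K))} the half-space of the same Gaussian measure. Then ∫_K ⟨x,θ⟩ dγ(x) ≥ ∫_{H_θ(K)} ⟨x,θ⟩ dγ(x), and consequently (∫_K ⟨x,θ⟩ dγ)² ≤ (∫_{H_θ(K)} ⟨x,θ⟩ dγ)². -/

import Mathlib

/-!
Subtracting the level `c`, the integrand `f - c` is `≤ 0` on the sublevel set `S = {f ≤ c}` and
`≥ 0` off it, so among all sets of measure `μ S` the set `S` minimizes `∫ f` (the bathtub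
principle); this gives the first inequality with `f = ⟨·, θ⟩`. For the second, the same principle
applied to `-f` compares `K` with the reflected half-space `-S`, and since the Gaussian measure is
symmetric and `f` is odd, `∫_{-S} f = -∫_S f`. Hence `∫_S f ≤ ∫_K f ≤ -∫_S f`.
-/

open MeasureTheory Real Set

/-- The standard Gaussian measure on `ℝⁿ`. -/
noncomputable def stdGaussian (n : ℕ) : Measure (EuclideanSpace ℝ (Fin n)) :=
  volume.withDensity fun x =>
    ENNReal.ofReal ((2 * π) ^ (-(n : ℝ) / 2) * Real.exp (-‖x‖ ^ 2 / 2))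

section Bathtub

variable {α : Type*} [MeasurableSpace α] {μ : Measure α} {f : α → ℝ} {s : Set α} {c : ℝ}

theorem setIntegral_sub_const_eq (hf : IntegrableOn f s μ) (hμs : μ s ≠ ⊤) :
    ∫ x in s, (f x - c) ∂μ = ∫ x in s, f x ∂μ - μ.real s * c := by
  rw [integral_sub hf (integrableOn_const hμs), setIntegral_const, smul_eq_mul]

theorem setIntegral_sublevel_le_of_measure_eq (hs : MeasurableSet s)
    (hS : MeasurableSet {x | f x ≤ c}) (hμ : μ {x | f x ≤ c} = μ s) (hμs : μ s ≠ ⊤)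
    (hfs : IntegrableOn f s μ) (hfS : IntegrableOn f {x | f x ≤ c} μ) :
    ∫ x in {x | f x ≤ c}, f x ∂μ ≤ ∫ x in s, f x ∂μ := by
  set S := {x | f x ≤ c}
  have hμS : μ S ≠ ⊤ := hμ ▸ hμs
  have hgs : IntegrableOn (fun x => f x - c) s μ := hfs.sub (integrableOn_const hμs)
  have hgS : IntegrableOn (fun x => f x - c) S μ := hfS.sub (integrableOn_const hμS)
  have h_nonpos : ∫ x in S \ s, (f x - c) ∂μ ≤ 0 :=
    setIntegral_nonpos (hS.diff hs) fun x hx => sub_nonpos.mpr hx.1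
  have h_nonneg : 0 ≤ ∫ x in s \ S, (f x - c) ∂μ :=
    setIntegral_nonneg (hs.diff hS) fun x hx => sub_nonneg.mpr (not_le.mp hx.2).le
  have key : ∫ x in S, (f x - c) ∂μ ≤ ∫ x in s, (f x - c) ∂μ := calc
    ∫ x in S, (f x - c) ∂μ = ∫ x in s ∩ S, (f x - c) ∂μ + ∫ x in S \ s, (f x - c) ∂μ := by
      rw [inter_comm, integral_inter_add_sdiff hs hgS]
    _ ≤ ∫ x in s ∩ S, (f x - c) ∂μ + ∫ x in s \ S, (f x - c) ∂μ := by linarith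
    _ = ∫ x in s, (f x - c) ∂μ := integral_inter_add_sdiff hS hgs
  have hμ_real : μ.real S = μ.real s := by simp only [measureReal_def, hμ]
  rw [setIntegral_sub_const_eq hfS hμS, setIntegral_sub_const_eq hfs hμs, hμ_real] at key
  linarith

end Bathtub

section NegInvariant

variable {E : Type*} [MeasurableSpace E] {μ : Measure E}

theorem isNegInvariant_withDensity [InvolutiveNeg E] [MeasurableNeg E] [μ.IsNegInvariant]
    {g : E → ENNReal} (hg : ∀ x, g (-x) = g x) : (μ.withDensity g).IsNegInvariant := by
  refine ⟨Measure.ext fun t ht => ?_⟩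
  rw [Measure.neg_apply, withDensity_apply _ ht.neg, withDensity_apply _ ht,
    ← (Measure.measurePreserving_neg μ).setLIntegral_comp_preimage_emb measurableEmbedding_neg]
  simp only [hg, Set.neg_preimage, neg_neg]

variable [AddGroup E] [MeasurableNeg E] [μ.IsNegInvariant] {f : E → ℝ} {s : Set E} {c : ℝ}

theorem setIntegral_neg_of_odd (hodd : ∀ x, f (-x) = -f x) (t : Set E) :
    ∫ x in -t, f x ∂μ = -∫ x in t, f x ∂μ := by
  rw [← (Measure.measurePreserving_neg μ).setIntegral_preimage_emb measurableEmbedding_neg f t,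
    ← integral_neg, Set.neg_preimage]
  simp only [hodd, neg_neg]

theorem sq_setIntegral_le_sq_setIntegral_sublevel_of_odd (hodd : ∀ x, f (-x) = -f x)
    (hs : MeasurableSet s) (hS : MeasurableSet {x | f x ≤ c}) (hμ : μ {x | f x ≤ c} = μ s)
    (hμs : μ s ≠ ⊤) (hfs : IntegrableOn f s μ) (hfS : IntegrableOn f {x | f x ≤ c} μ) :
    (∫ x in s, f x ∂μ) ^ 2 ≤ (∫ x in {x | f x ≤ c}, f x ∂μ) ^ 2 := by
  set S := {x | f x ≤ c}
  have h_reflect : {x | -f x ≤ c} = -S := by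
    ext x
    simp [S, hodd]
  have hf_reflect : IntegrableOn (fun x => -f x) (-S) μ := by
    simpa only [hodd] using hfS.comp_neg
  have lower : ∫ x in S, f x ∂μ ≤ ∫ x in s, f x ∂μ :=
    setIntegral_sublevel_le_of_measure_eq hs hS hμ hμs hfs hfS
  have upper : ∫ x in -S, -f x ∂μ ≤ ∫ x in s, -f x ∂μ := by
    rw [← h_reflect] at hf_reflect ⊢
    refine setIntegral_sublevel_le_of_measure_eq hs ?_ ?_ hμs hfs.neg hf_reflect
    · exact h_reflect ▸ hS.neg
    · rw [h_reflect, Measure.measure_neg, hμ]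
  rw [integral_neg, integral_neg, setIntegral_neg_of_odd hodd, neg_neg, le_neg] at upper
  rw [← neg_sq (∫ x in S, f x ∂μ)]
  exact sq_le_sq' (by rwa [neg_neg]) upper

end NegInvariant

instance (n : ℕ) : IsFiniteMeasure (stdGaussian n) := by
  have h : Integrable fun x : EuclideanSpace ℝ (Fin n) => rexp (-(1 / 2 : ℝ) * ‖x‖ ^ 2) := by
    simpa [Complex.norm_exp, ← Complex.ofReal_pow] using
      (GaussianFourier.integrable_cexp_neg_mul_sq_norm_add (V := EuclideanSpace ℝ (Fin n))
        (b := (1 / 2 : ℂ)) (by norm_num) 0 0).norm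
  have h_density : Integrable fun x : EuclideanSpace ℝ (Fin n) =>
      (2 * π) ^ (-(n : ℝ) / 2) * rexp (-‖x‖ ^ 2 / 2) := by
    simpa only [neg_div, neg_mul, one_div, inv_mul_eq_div] using h.const_mul _
  exact isFiniteMeasure_withDensity h_density.lintegral_lt_top.ne

instance (n : ℕ) : (stdGaussian n).IsNegInvariant :=
  isNegInvariant_withDensity fun x => by rw [norm_neg]

theorem stmt9_general (n : ℕ) (K : Set (EuclideanSpace ℝ (Fin n)))
    (hmeas : MeasurableSet K)
    (θ : EuclideanSpace ℝ (Fin n))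
    (c : ℝ)
    (hc : stdGaussian n {x : EuclideanSpace ℝ (Fin n) | (inner ℝ x θ : ℝ) ≤ c}
      = stdGaussian n K)
    (hint1 : IntegrableOn (fun x => (inner ℝ x θ : ℝ)) K (stdGaussian n))
    (hint2 : IntegrableOn (fun x => (inner ℝ x θ : ℝ))
      {x : EuclideanSpace ℝ (Fin n) | (inner ℝ x θ : ℝ) ≤ c} (stdGaussian n)) :
    (∫ x in {x : EuclideanSpace ℝ (Fin n) | (inner ℝ x θ : ℝ) ≤ c},
        (inner ℝ x θ : ℝ) ∂(stdGaussian n))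
      ≤ (∫ x in K, (inner ℝ x θ : ℝ) ∂(stdGaussian n)) ∧
    (∫ x in K, (inner ℝ x θ : ℝ) ∂(stdGaussian n)) ^ 2
      ≤ (∫ x in {x : EuclideanSpace ℝ (Fin n) | (inner ℝ x θ : ℝ) ≤ c},
          (inner ℝ x θ : ℝ) ∂(stdGaussian n)) ^ 2 := by
  have hS : MeasurableSet {x : EuclideanSpace ℝ (Fin n) | (inner ℝ x θ : ℝ) ≤ c} :=
    measurableSet_le (by fun_prop) measurable_const
  have hK_fin : stdGaussian n K ≠ ⊤ := measure_ne_top _ _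
  exact ⟨setIntegral_sublevel_le_of_measure_eq hmeas hS hc hK_fin hint1 hint2,
    sq_setIntegral_le_sq_setIntegral_sublevel_of_odd (fun x => inner_neg_left x θ)
      hmeas hS hc hK_fin hint1 hint2⟩

/-- For a convex set `K` of positive Gaussian measure and the half-space
`H_θ(K) = {⟨x,θ⟩ ≤ c}` of the same Gaussian measure, the linear moment over `K`
dominates that over `H_θ(K)`, and its square is dominated by the square of the latter. -/
theorem stmt9 (n : ℕ) (K : Set (EuclideanSpace ℝ (Fin n)))
    (hconv : Convex ℝ K) (hmeas : MeasurableSet K)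
    (hpos : 0 < stdGaussian n K)
    (θ : EuclideanSpace ℝ (Fin n)) (hθ : ‖θ‖ = 1)
    (c : ℝ)
    (hc : stdGaussian n {x : EuclideanSpace ℝ (Fin n) | (inner ℝ x θ : ℝ) ≤ c}
      = stdGaussian n K)
    (hint1 : IntegrableOn (fun x => (inner ℝ x θ : ℝ)) K (stdGaussian n))
    (hint2 : IntegrableOn (fun x => (inner ℝ x θ : ℝ))
      {x : EuclideanSpace ℝ (Fin n) | (inner ℝ x θ : ℝ) ≤ c} (stdGaussian n)) :
    (∫ x in {x : EuclideanSpace ℝ (Fin n) | (inner ℝ x θ : ℝ) ≤ c},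
        (inner ℝ x θ : ℝ) ∂(stdGaussian n))
      ≤ (∫ x in K, (inner ℝ x θ : ℝ) ∂(stdGaussian n)) ∧
    (∫ x in K, (inner ℝ x θ : ℝ) ∂(stdGaussian n)) ^ 2
      ≤ (∫ x in {x : EuclideanSpace ℝ (Fin n) | (inner ℝ x θ : ℝ) ≤ c},
          (inner ℝ x θ : ℝ) ∂(stdGaussian n)) ^ 2 :=
  stmt9_general n K hmeas θ c hc hint1 hint2
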